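/- arXiv:2402.18721 — 5 statements merged into one kernel-verified Lean document; each statement's English description precedes it below -/
import Mathlib

section
/- Let Y be an n₁×n₂ real matrix of rank r, and let I ⊆ {1,...,n₁} and J ⊆ {1,...,n₂} be index sets of size r such that the r×r submatrix Y(I,J) is invertible. Then Y = Y(:,J) · Y(I,J)^{-1} · Y(I,:), i.e., the CUR decomposition recovers Y exactly. -/
/-! Since `Y(I,J)` is an invertible `r × r` submatrix of `Y(:,J)`, the `r` columns `Y(:,J)` have
rank `r = rank Y`, so they span the column space of `Y` and `Y = Y(:,J) X` for some `X`.
Restricting to the rows `I` gives `Y(I,:) = Y(I,J) X`, hence `X = Y(I,J)⁻¹ Y(I,:)`. -/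

open Matrix

namespace Matrix

variable {m n k : Type*} [Fintype k]

theorem range_mulVecLin_submatrix_id_le [Fintype n] {R : Type*} [CommSemiring R] (Y : Matrix m n R)
    (c : k → n) :
    LinearMap.range (Y.submatrix id c).mulVecLin ≤ LinearMap.range Y.mulVecLin := by
  rw [range_mulVecLin, range_mulVecLin]
  exact Submodule.span_mono fun _ ⟨j, hj⟩ => ⟨c j, hj⟩

theorem exists_submatrix_id_mul_eq_of_rank_eq [Fintype n] {K : Type*} [Field K] (Y : Matrix m n K)
    (c : k → n) (hrank : (Y.submatrix id c).rank = Y.rank) :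
    ∃ X : Matrix k n K, Y.submatrix id c * X = Y := by
  have hrange : LinearMap.range (Y.submatrix id c).mulVecLin = LinearMap.range Y.mulVecLin :=
    Submodule.eq_of_le_of_finrank_eq (range_mulVecLin_submatrix_id_le Y c) hrank
  have hcol (j : n) : ∃ x, Y.submatrix id c *ᵥ x = Y.col j := by
    have hmem : Y.col j ∈ LinearMap.range Y.mulVecLin := by
      rw [range_mulVecLin]
      exact Submodule.subset_span ⟨j, rfl⟩
    rw [← hrange] at hmem
    exact hmem
  choose x hx using hcol
  refine ⟨(of x)ᵀ, ext fun i j => ?_⟩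
  simpa [mulVec, mul_apply, dotProduct] using congrFun (hx j) i

theorem mul_eq_mul_nonsing_inv_mul_submatrix [DecidableEq k] {R : Type*} [CommRing R]
    (C : Matrix m k R) (X : Matrix k n R) (g : k → m) (hA : IsUnit (C.submatrix g id)) :
    C * X = C * (C.submatrix g id)⁻¹ * (C * X).submatrix g id := by
  have hR : (C * X).submatrix g id = C.submatrix g id * X := rfl
  rw [hR, Matrix.mul_assoc, nonsing_inv_mul_cancel_left _ _ ((isUnit_iff_isUnit_det _).mp hA)]

end Matrix

theorem cur_decomposition_exact_general
    {n₁ n₂ r : ℕ} (Y : Matrix (Fin n₁) (Fin n₂) ℝ)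
    (hrank : Y.rank = r)
    (g : Fin r → Fin n₁)
    (h : Fin r → Fin n₂)
    (hInv : IsUnit (Y.submatrix g h)) :
    Y = Y.submatrix id h * (Y.submatrix g h)⁻¹ * Y.submatrix g id := by
  set C := Y.submatrix id h
  have hC : C.rank = Y.rank := by
    refine le_antisymm (rank_submatrix_le Y id h) ?_
    calc Y.rank = (C.submatrix g id).rank := by
          rw [hrank, rank_of_isUnit (C.submatrix g id) hInv, Fintype.card_fin]
      _ ≤ C.rank := rank_submatrix_le C g id
  obtain ⟨X, hX⟩ := exists_submatrix_id_mul_eq_of_rank_eq Y h hC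
  calc Y = C * X := hX.symm
    _ = C * (C.submatrix g id)⁻¹ * (C * X).submatrix g id :=
        mul_eq_mul_nonsing_inv_mul_submatrix C X g hInv
    _ = Y.submatrix id h * (Y.submatrix g h)⁻¹ * Y.submatrix g id := by rw [hX]; rfl

/-- CUR decomposition: if `Y` is an `n₁ × n₂` real matrix of rank `r`, and
`I ⊆ {1,…,n₁}`, `J ⊆ {1,…,n₂}` (encoded by injective maps `g`, `h`) are index
sets of size `r` such that the `r × r` submatrix `Y(I,J)` is invertible, then
`Y = Y(:,J) · Y(I,J)⁻¹ · Y(I,:)`. -/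
theorem cur_decomposition_exact
    {n₁ n₂ r : ℕ} (Y : Matrix (Fin n₁) (Fin n₂) ℝ)
    (hrank : Y.rank = r)
    (g : Fin r → Fin n₁) (hg : Function.Injective g)
    (h : Fin r → Fin n₂) (hh : Function.Injective h)
    (hInv : IsUnit (Y.submatrix g h)) :
    Y = Y.submatrix id h * (Y.submatrix g h)⁻¹ * Y.submatrix g id :=
  cur_decomposition_exact_general Y hrank g h hInv
end

section
/- With the interpolatory tangent-space projector P_Y Z = Z(:,J) V(J,:)^{-T} V^T − U U(I,:)^{-1} Z(I,J) V(J,:)^{-T} V^T + U U(I,:)^{-1} Z(I,:), the projection interpolates Z along the selected rows and columns: for every i ∈ I and every j ∈ {1,...,m}, (P_Y Z)(i,j) = Z(i,j), and for every j ∈ J and every i ∈ {1,...,n}, (P_Y Z)(i,j) = Z(i,j). -/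
open Matrix

/-- The interpolatory tangent-space projector
`P_Y Z = Z(:,J) V(J,:)⁻ᵀ Vᵀ − U U(I,:)⁻¹ Z(I,J) V(J,:)⁻ᵀ Vᵀ + U U(I,:)⁻¹ Z(I,:)`. -/
noncomputable def PY {n m r : ℕ} (U : Matrix (Fin n) (Fin r) ℝ) (V : Matrix (Fin m) (Fin r) ℝ)
    (g : Fin r → Fin n) (h : Fin r → Fin m)
    (Z : Matrix (Fin n) (Fin m) ℝ) : Matrix (Fin n) (Fin m) ℝ :=
  Z.submatrix id h * ((V.submatrix h id)ᵀ)⁻¹ * Vᵀ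
    - U * (U.submatrix g id)⁻¹ * Z.submatrix g h * ((V.submatrix h id)ᵀ)⁻¹ * Vᵀ
    + U * (U.submatrix g id)⁻¹ * Z.submatrix g id

/-!
On the rows `I`, the factor `U U(I,:)⁻¹` becomes `U(I,:) U(I,:)⁻¹ = 1`, so the first two terms of
`P_Y Z` cancel and the third is `Z(I,:)`. Symmetrically, on the columns `J` the factor
`V(J,:)⁻ᵀ Vᵀ` becomes `1`, the last two terms cancel and the first is `Z(:,J)`.
-/

namespace Matrix

variable {m n r R : Type*} [Fintype r] [DecidableEq r] [CommRing R]

theorem submatrix_mul_nonsing_inv_submatrix_mul (A : Matrix n r R) (g : r → n)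
    (hA : IsUnit (A.submatrix g id)) (X : Matrix r m R) :
    (A * (A.submatrix g id)⁻¹ * X).submatrix g id = X := by
  change A.submatrix g id * (A.submatrix g id)⁻¹ * X = X
  rw [mul_nonsing_inv _ ((isUnit_iff_isUnit_det _).mp hA), Matrix.one_mul]

theorem submatrix_mul_transpose_nonsing_inv_mul_transpose (B : Matrix m r R) (h : r → m)
    (hB : IsUnit (B.submatrix h id)) (X : Matrix n r R) :
    (X * ((B.submatrix h id)ᵀ)⁻¹ * Bᵀ).submatrix id h = X := by
  have hBt : IsUnit (B.submatrix h id)ᵀ.det := by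
    rwa [det_transpose, ← isUnit_iff_isUnit_det]
  change X * ((B.submatrix h id)ᵀ)⁻¹ * (B.submatrix h id)ᵀ = X
  rw [Matrix.mul_assoc, nonsing_inv_mul _ hBt, Matrix.mul_one]

end Matrix

section PY

variable {n m r : ℕ} (U : Matrix (Fin n) (Fin r) ℝ) (V : Matrix (Fin m) (Fin r) ℝ)
  (g : Fin r → Fin n) (h : Fin r → Fin m) (Z : Matrix (Fin n) (Fin m) ℝ)

theorem PY_submatrix_rows (hUg : IsUnit (U.submatrix g id)) :
    (PY U V g h Z).submatrix g id = Z.submatrix g id := by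
  simp only [PY, submatrix_add, submatrix_sub, Pi.add_apply, Pi.sub_apply]
  rw [Matrix.mul_assoc (U * _), Matrix.mul_assoc (U * _),
    submatrix_mul_nonsing_inv_submatrix_mul U g hUg,
    submatrix_mul_nonsing_inv_submatrix_mul U g hUg]
  change Z.submatrix g h * ((V.submatrix h id)ᵀ)⁻¹ * Vᵀ - _ + _ = _
  rw [sub_self, zero_add]

theorem PY_submatrix_cols (hVh : IsUnit (V.submatrix h id)) :
    (PY U V g h Z).submatrix id h = Z.submatrix id h := by
  simp only [PY, submatrix_add, submatrix_sub, Pi.add_apply, Pi.sub_apply]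
  rw [submatrix_mul_transpose_nonsing_inv_mul_transpose V h hVh,
    submatrix_mul_transpose_nonsing_inv_mul_transpose V h hVh]
  change _ - _ + U * (U.submatrix g id)⁻¹ * Z.submatrix g h = _
  rw [sub_add_cancel]

end PY

theorem oblique_tangent_projector_cross_interpolation_general
    {n m r : ℕ}
    (U : Matrix (Fin n) (Fin r) ℝ) (V : Matrix (Fin m) (Fin r) ℝ)
    (g : Fin r → Fin n)
    (h : Fin r → Fin m)
    (hUg : IsUnit (U.submatrix g id)) (hVh : IsUnit (V.submatrix h id))
    (Z : Matrix (Fin n) (Fin m) ℝ) :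
    (∀ (α : Fin r) (j : Fin m), PY U V g h Z (g α) j = Z (g α) j) ∧
    (∀ (i : Fin n) (β : Fin r), PY U V g h Z i (h β) = Z i (h β)) :=
  ⟨fun α j => congrFun₂ (PY_submatrix_rows U V g h Z hUg) α j,
    fun i β => congrFun₂ (PY_submatrix_cols U V g h Z hVh) i β⟩

/-- The interpolatory tangent-space projector interpolates `Z` along the selected
rows `I` and columns `J`: `(P_Y Z)(i,j) = Z(i,j)` whenever `i ∈ I` or `j ∈ J`. -/
theorem oblique_tangent_projector_cross_interpolation
    {n m r : ℕ}
    (U : Matrix (Fin n) (Fin r) ℝ) (V : Matrix (Fin m) (Fin r) ℝ)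
    (hU : Uᵀ * U = 1) (hV : Vᵀ * V = 1)
    (g : Fin r → Fin n) (hg : Function.Injective g)
    (h : Fin r → Fin m) (hh : Function.Injective h)
    (hUg : IsUnit (U.submatrix g id)) (hVh : IsUnit (V.submatrix h id))
    (Z : Matrix (Fin n) (Fin m) ℝ) :
    (∀ (α : Fin r) (j : Fin m), PY U V g h Z (g α) j = Z (g α) j) ∧
    (∀ (i : Fin n) (β : Fin r), PY U V g h Z i (h β) = Z i (h β)) :=
  oblique_tangent_projector_cross_interpolation_general U V g h hUg hVh Z
end

section
/- For the DEIM greedy index selection applied to a matrix V ∈ ℝ^{n×r} with linearly independent columns, at each step j the selected index l_j satisfies: the residual r = v_j − V(:,1:j−1) · V(l_{1:j−1},1:j−1)^{-1} · v_j(l_{1:j−1}) is nonzero, hence the j×j matrix V(l_{1:j}, 1:j) is invertible. Consequently, after r steps the full r×r matrix V(l,:) is invertible. -/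
/-! The block `V(l_{1:j}, 1:j)` has `V(l_{1:j-1}, 1:j-1)` as its top-left corner, and the Schur
complement of that corner is exactly the step-`j` DEIM residual at `l_j`. By the Schur determinant
formula the determinants of the successive blocks are therefore products of these residuals.
A residual vanishing at its maximizer `l_j` vanishes everywhere, which would put column `j` of `V`
in the span of the previous columns, contradicting full column rank. -/

open Matrix

/-- The DEIM residual at step `j`: given a matrix `V` and previously selected
indices `l 0, …, l (j-1)`, the residual of the `j`-th column after interpolatory
projection onto the first `j` columns at those indices:
`r = v_j − V(:,1:j−1) · V(l_{1:j−1},1:j−1)⁻¹ · v_j(l_{1:j−1})`. -/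
noncomputable def deimRes {ι : Type} [Fintype ι] [DecidableEq ι] {r : ℕ}
    (V : Matrix ι (Fin r) ℝ) (l : Fin r → ι) (j : Fin r) (i : ι) : ℝ :=
  V i j -
    Matrix.mulVec (Matrix.of fun (i' : ι) (k : Fin j.1) => V i' (Fin.castLE j.2.le k))
      (Matrix.mulVec
        (Matrix.of fun (k k' : Fin j.1) =>
            V (l (Fin.castLE j.2.le k)) (Fin.castLE j.2.le k'))⁻¹
        (fun k : Fin j.1 => V (l (Fin.castLE j.2.le k)) j)) i

namespace Matrix

variable {K : Type*} [Field K] {m : ℕ}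

theorem det_eq_det_castSucc_mul_schur (M : Matrix (Fin (m + 1)) (Fin (m + 1)) K)
    (hA : IsUnit (M.submatrix Fin.castSucc Fin.castSucc).det) :
    M.det = (M.submatrix Fin.castSucc Fin.castSucc).det *
      (M (Fin.last m) (Fin.last m) - (fun k => M (Fin.last m) k.castSucc) ⬝ᵥ
        ((M.submatrix Fin.castSucc Fin.castSucc)⁻¹ *ᵥ fun k => M k.castSucc (Fin.last m))) := by
  set A := M.submatrix Fin.castSucc Fin.castSucc
  have : Invertible A := invertibleOfIsUnitDet _ hA
  have hblocks : M.submatrix finSumFinEquiv finSumFinEquiv =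
      fromBlocks A (of fun k _ => M k.castSucc (Fin.last m))
        (of fun _ k => M (Fin.last m) k.castSucc) (of fun _ _ => M (Fin.last m) (Fin.last m)) := by
    ext (i | i) (j | j) <;>
      simp only [submatrix_apply, finSumFinEquiv_apply_left, finSumFinEquiv_apply_right,
        Fin.fin_one_eq_zero, fromBlocks_apply₁₁, fromBlocks_apply₁₂, fromBlocks_apply₂₁,
        fromBlocks_apply₂₂, of_apply] <;> rfl
  rw [← det_submatrix_equiv_self finSumFinEquiv, hblocks, det_fromBlocks₁₁, det_fin_one,
    invOf_eq_nonsing_inv]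
  simp [Matrix.mul_assoc, mul_apply, mulVec, dotProduct]

theorem linearIndependent_col_of_rank_eq {ι : Type*} [Fintype ι] {r : ℕ}
    {V : Matrix ι (Fin r) K} (hV : V.rank = r) : LinearIndependent K V.col := by
  rw [linearIndependent_iff_card_eq_finrank_span, Fintype.card_fin, Set.finrank,
    ← rank_eq_finrank_span_cols, hV]

end Matrix

section DEIM

variable {ι : Type} [Fintype ι] [DecidableEq ι] {r : ℕ} (V : Matrix ι (Fin r) ℝ) (l : Fin r → ι)

theorem det_submatrix_deim_succ (j : Fin r)
    (hj : IsUnit (V.submatrix (l ∘ Fin.castLE j.2.le) (Fin.castLE j.2.le)).det) :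
    (V.submatrix (l ∘ Fin.castLE j.2) (Fin.castLE j.2)).det =
      (V.submatrix (l ∘ Fin.castLE j.2.le) (Fin.castLE j.2.le)).det * deimRes V l j (l j) :=
  det_eq_det_castSucc_mul_schur _ hj

theorem deimRes_ne_zero (hV : LinearIndependent ℝ V.col) (j : Fin r) : deimRes V l j ≠ 0 := by
  intro h
  have hj : j ∉ Set.range (Fin.castLE j.2.le) := fun ⟨k, hk⟩ => k.2.ne (congrArg Fin.val hk)
  apply hV.notMem_span_image hj
  have hcol : V.col j = V.submatrix id (Fin.castLE j.2.le) *ᵥ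
      ((V.submatrix (l ∘ Fin.castLE j.2.le) (Fin.castLE j.2.le))⁻¹ *ᵥ
        fun k => V (l (Fin.castLE j.2.le k)) j) :=
    funext fun i => sub_eq_zero.mp (congrFun h i)
  rw [hcol, ← Set.range_comp]
  exact (range_mulVecLin (V.submatrix id (Fin.castLE j.2.le))).le (LinearMap.mem_range_self _ _)

theorem deimRes_apply_ne_zero (hV : LinearIndependent ℝ V.col) (j : Fin r)
    (hl : ∀ i, |deimRes V l j i| ≤ |deimRes V l j (l j)|) : deimRes V l j (l j) ≠ 0 := by
  intro h
  refine deimRes_ne_zero V l hV j (funext fun i => abs_nonpos_iff.mp ?_)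
  simpa [h] using hl i

theorem isUnit_det_submatrix_deim (hres : ∀ j, deimRes V l j (l j) ≠ 0) :
    ∀ m (hm : m ≤ r), IsUnit (V.submatrix (l ∘ Fin.castLE hm) (Fin.castLE hm)).det
  | 0, _ => by simp
  | m + 1, hm => by
    have ih := isUnit_det_submatrix_deim hres m (Nat.le_of_succ_le hm)
    rw [det_submatrix_deim_succ V l ⟨m, hm⟩ ih]
    exact ih.mul (hres ⟨m, hm⟩).isUnit

end DEIM

/-- DEIM invertibility lemma: if `V` has full column rank and the indices
`l 0, …, l (r-1)` are selected greedily (each `l j` maximizes the absolute value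
of the step-`j` residual), then at each step the residual at the selected index
is nonzero, each leading `(j+1) × (j+1)` submatrix `V(l_{1:j+1},1:j+1)` is
invertible, and consequently the full `r × r` matrix `V(l,:)` is invertible. -/
theorem deim_selected_submatrix_invertible
    {n r : ℕ} (V : Matrix (Fin n) (Fin r) ℝ)
    (hV : V.rank = r)
    (l : Fin r → Fin n)
    (hl : ∀ (j : Fin r) (i : Fin n), |deimRes V l j i| ≤ |deimRes V l j (l j)|) :
    (∀ j : Fin r, deimRes V l j (l j) ≠ 0) ∧
    (∀ j : Fin r, IsUnit (Matrix.of fun (k k' : Fin (j.1 + 1)) =>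
        V (l (Fin.castLE j.2 k)) (Fin.castLE j.2 k'))) ∧
    IsUnit (V.submatrix l id) := by
  have hres j := deimRes_apply_ne_zero V l (linearIndependent_col_of_rank_eq hV) j (hl j)
  have hdet := isUnit_det_submatrix_deim V l hres
  exact ⟨hres, fun j => (isUnit_iff_isUnit_det _).mpr (hdet _ j.2),
    (isUnit_iff_isUnit_det _).mpr (hdet r le_rfl)⟩
end

section
/- Consider the projector-splitting decomposition P_Y = P₁⁺ − P₁⁻ + P₂⁺ on ℝ^{n×m}, where P₁⁺ Z = Z(:,J) V(J,:)^{-T} V^T, P₁⁻ Z = U U(I,:)^{-1} Z(I,J) V(J,:)^{-T} V^T, and P₂⁺ Z = U U(I,:)^{-1} Z(I,:). Then each of P₁⁺, P₁⁻, P₂⁺ is individually idempotent, and P₁⁻ = P₂⁺ ∘ P₁⁺ = P₁⁺ ∘ P₂⁺. -/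
open Matrix

/-- `P₁⁺ Z = Z(:,J) V(J,:)⁻ᵀ Vᵀ`. -/
noncomputable def P1p {n m r : ℕ} (V : Matrix (Fin m) (Fin r) ℝ)
    (h : Fin r → Fin m) (Z : Matrix (Fin n) (Fin m) ℝ) : Matrix (Fin n) (Fin m) ℝ :=
  Z.submatrix id h * ((V.submatrix h id)ᵀ)⁻¹ * Vᵀ

/-- `P₁⁻ Z = U U(I,:)⁻¹ Z(I,J) V(J,:)⁻ᵀ Vᵀ`. -/
noncomputable def P1m {n m r : ℕ} (U : Matrix (Fin n) (Fin r) ℝ)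
    (V : Matrix (Fin m) (Fin r) ℝ) (g : Fin r → Fin n) (h : Fin r → Fin m)
    (Z : Matrix (Fin n) (Fin m) ℝ) : Matrix (Fin n) (Fin m) ℝ :=
  U * (U.submatrix g id)⁻¹ * Z.submatrix g h * ((V.submatrix h id)ᵀ)⁻¹ * Vᵀ

/-- `P₂⁺ Z = U U(I,:)⁻¹ Z(I,:)`. -/
noncomputable def P2p {n m r : ℕ} (U : Matrix (Fin n) (Fin r) ℝ)
    (g : Fin r → Fin n) (Z : Matrix (Fin n) (Fin m) ℝ) : Matrix (Fin n) (Fin m) ℝ :=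
  U * (U.submatrix g id)⁻¹ * Z.submatrix g id

/-!
`P₁⁺` interpolates `Z` on the columns `J`, i.e. `(P₁⁺ Z)(:,J) = Z(:,J)`, and `P₂⁺` interpolates
`Z` on the rows `I`. Since `P₁⁺ Z` depends on `Z` only through `Z(:,J)` (and `P₂⁺ Z` only through
`Z(I,:)`), both are idempotent. Composing them in either order only re-associates the
product defining `P₁⁻`, so `P₁⁻ = P₁⁺ ∘ P₂⁺ = P₂⁺ ∘ P₁⁺` and its idempotence follows formally.
-/

section ProjectorSplitting

variable {n m r : ℕ} {U : Matrix (Fin n) (Fin r) ℝ} {V : Matrix (Fin m) (Fin r) ℝ}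
  {g : Fin r → Fin n} {h : Fin r → Fin m}

theorem P1p_submatrix_cols (hVh : IsUnit (V.submatrix h id))
    (Z : Matrix (Fin n) (Fin m) ℝ) : (P1p V h Z).submatrix id h = Z.submatrix id h := by
  have hdet : IsUnit (V.submatrix h id)ᵀ.det := by
    rw [det_transpose]; exact (isUnit_iff_isUnit_det _).mp hVh
  rw [P1p, submatrix_mul _ _ _ id _ Function.bijective_id, submatrix_id_id,
    ← transpose_submatrix]
  exact nonsing_inv_mul_cancel_right _ _ hdet

theorem P2p_submatrix_rows (hUg : IsUnit (U.submatrix g id))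
    (Z : Matrix (Fin n) (Fin m) ℝ) : (P2p U g Z).submatrix g id = Z.submatrix g id := by
  rw [P2p, submatrix_mul _ _ _ id _ Function.bijective_id, submatrix_id_id,
    submatrix_mul _ _ _ id _ Function.bijective_id, submatrix_id_id,
    mul_nonsing_inv _ ((isUnit_iff_isUnit_det _).mp hUg), Matrix.one_mul]

theorem P1p_P1p (hVh : IsUnit (V.submatrix h id)) (Z : Matrix (Fin n) (Fin m) ℝ) :
    P1p V h (P1p V h Z) = P1p V h Z := by
  rw [P1p, P1p_submatrix_cols hVh, P1p]

theorem P2p_P2p (hUg : IsUnit (U.submatrix g id)) (Z : Matrix (Fin n) (Fin m) ℝ) :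
    P2p U g (P2p U g Z) = P2p U g Z := by
  rw [P2p, P2p_submatrix_rows hUg, P2p]

theorem P2p_P1p (Z : Matrix (Fin n) (Fin m) ℝ) :
    P2p U g (P1p V h Z) = P1m U V g h Z := by
  rw [P2p, P1p, submatrix_mul _ _ _ id _ Function.bijective_id,
    submatrix_mul _ _ _ id _ Function.bijective_id, submatrix_submatrix, P1m]
  simp only [submatrix_id_id, Function.id_comp, Function.comp_id, Matrix.mul_assoc]

theorem P1p_P2p (Z : Matrix (Fin n) (Fin m) ℝ) :
    P1p V h (P2p U g Z) = P1m U V g h Z := by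
  rw [P1p, P2p, submatrix_mul _ _ _ id _ Function.bijective_id, submatrix_submatrix, P1m]
  simp only [submatrix_id_id, Function.id_comp, Function.comp_id]

theorem P1m_P1m (hUg : IsUnit (U.submatrix g id)) (hVh : IsUnit (V.submatrix h id))
    (Z : Matrix (Fin n) (Fin m) ℝ) : P1m U V g h (P1m U V g h Z) = P1m U V g h Z :=
  calc P1m U V g h (P1m U V g h Z)
      = P1p V h (P2p U g (P2p U g (P1p V h Z))) := by rw [P2p_P1p, P1p_P2p]
    _ = P1p V h (P1p V h (P2p U g Z)) := by rw [P2p_P2p hUg, P2p_P1p, P1p_P2p]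
    _ = P1m U V g h Z := by rw [P1p_P1p hVh, P1p_P2p]

end ProjectorSplitting

theorem projector_splitting_terms_general
    {n m r : ℕ}
    (U : Matrix (Fin n) (Fin r) ℝ) (V : Matrix (Fin m) (Fin r) ℝ)
    (g : Fin r → Fin n)
    (h : Fin r → Fin m)
    (hUg : IsUnit (U.submatrix g id)) (hVh : IsUnit (V.submatrix h id)) :
    (∀ Z : Matrix (Fin n) (Fin m) ℝ, P1p V h (P1p V h Z) = P1p V h Z) ∧
    (∀ Z : Matrix (Fin n) (Fin m) ℝ, P1m U V g h (P1m U V g h Z) = P1m U V g h Z) ∧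
    (∀ Z : Matrix (Fin n) (Fin m) ℝ, P2p U g (P2p U g Z) = P2p U g Z) ∧
    (∀ Z : Matrix (Fin n) (Fin m) ℝ, P1m U V g h Z = P2p U g (P1p V h Z)) ∧
    (∀ Z : Matrix (Fin n) (Fin m) ℝ, P1m U V g h Z = P1p V h (P2p U g Z)) :=
  ⟨P1p_P1p hVh, P1m_P1m hUg hVh, P2p_P2p hUg, fun Z => (P2p_P1p Z).symm,
    fun Z => (P1p_P2p Z).symm⟩

/-- In the projector-splitting decomposition `P_Y = P₁⁺ − P₁⁻ + P₂⁺`, each of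
`P₁⁺`, `P₁⁻`, `P₂⁺` is idempotent, and `P₁⁻ = P₂⁺ ∘ P₁⁺ = P₁⁺ ∘ P₂⁺`. -/
theorem projector_splitting_terms
    {n m r : ℕ}
    (U : Matrix (Fin n) (Fin r) ℝ) (V : Matrix (Fin m) (Fin r) ℝ)
    (hU : Uᵀ * U = 1) (hV : Vᵀ * V = 1)
    (g : Fin r → Fin n) (hg : Function.Injective g)
    (h : Fin r → Fin m) (hh : Function.Injective h)
    (hUg : IsUnit (U.submatrix g id)) (hVh : IsUnit (V.submatrix h id)) :
    (∀ Z : Matrix (Fin n) (Fin m) ℝ, P1p V h (P1p V h Z) = P1p V h Z) ∧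
    (∀ Z : Matrix (Fin n) (Fin m) ℝ, P1m U V g h (P1m U V g h Z) = P1m U V g h Z) ∧
    (∀ Z : Matrix (Fin n) (Fin m) ℝ, P2p U g (P2p U g Z) = P2p U g Z) ∧
    (∀ Z : Matrix (Fin n) (Fin m) ℝ, P1m U V g h Z = P2p U g (P1p V h Z)) ∧
    (∀ Z : Matrix (Fin n) (Fin m) ℝ, P1m U V g h Z = P1p V h (P2p U g Z)) :=
  projector_splitting_terms_general U V g h hUg hVh
end

section
/- Let Q ∈ ℝ^{n×r} have orthonormal columns and I a size-r index set with Q(I,:) invertible. Then for the interpolatory projection P = Q Q(I,:)^{-1} E_I^T, the operator norm satisfies ‖P‖₂ = ‖Q(I,:)^{-1}‖₂ when r < n (and ‖P‖₂ ≥ 1 in general), so the error of interpolatory projection is bounded by ‖Z − PZ‖₂ ≤ ‖Q(I,:)^{-1}‖₂ · ‖(I − QQ^T)Z‖₂ for any Z ∈ ℝ^{n×m}. -/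
/-!
`P = Q Q(I,:)⁻¹ E_Iᵀ` satisfies `P Q = Q`, hence is idempotent and nonzero, so `‖P‖ ≥ 1`.
Since `Q` and `E_I` have orthonormal columns, `P = Q Q(I,:)⁻¹ E_Iᵀ` and
`Q(I,:)⁻¹ = Qᵀ P E_I` give the two inequalities between `‖P‖` and `‖Q(I,:)⁻¹‖`.
For the error, `Z - P Z = (1 - P) (1 - Q Qᵀ) Z`, and `‖1 - P‖ ≤ ‖P‖` for an idempotent `P`
with `‖P‖ ≥ 1` on a real inner product space: split `x = y + z` with `P y = 0`, `P z = z`;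
then `‖t z‖ ≤ ‖P‖ ‖y + t z‖` for all real `t` is a nonnegative quadratic in `t`, and its
discriminant condition together with AM-GM yields `‖y‖ ≤ ‖P‖ ‖y + z‖`.
-/

open Matrix

/-- The `n × r` column-selection matrix `E_I = Id(:,I)` associated to the
index selection `g : Fin r → Fin n`. -/
def selId {n r : ℕ} (g : Fin r → Fin n) : Matrix (Fin n) (Fin r) ℝ :=
  Matrix.of fun i α => if i = g α then (1 : ℝ) else 0

/-- The spectral (ℓ² operator) norm of a real matrix. -/
noncomputable def specNorm {a b : ℕ} (A : Matrix (Fin a) (Fin b) ℝ) : ℝ :=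
  ‖LinearMap.toContinuousLinearMap (Matrix.toEuclideanLin A)‖

open scoped Matrix.Norms.L2Operator RealInnerProductSpace

section ProjectionNorm

variable {E : Type*} [NormedAddCommGroup E] [InnerProductSpace ℝ E]

lemma ContinuousLinearMap.norm_sub_apply_le_of_isIdempotentElem {T : E →L[ℝ] E}
    (hT : IsIdempotentElem T) (hT1 : 1 ≤ ‖T‖) (x : E) : ‖x - T x‖ ≤ ‖T‖ * ‖x‖ := by
  set y := x - T x
  set z := T x
  have hTz : T z = z := DFunLike.congr_fun hT x
  have hTy : T y = 0 := by rw [map_sub, hTz, sub_self]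
  set k := ‖T‖ ^ 2
  have hquad : ∀ t : ℝ,
      0 ≤ ((k - 1) * ‖z‖ ^ 2) * (t * t) + (2 * k * ⟪y, z⟫) * t + k * ‖y‖ ^ 2 := by
    intro t
    have h : ‖t • z‖ ^ 2 ≤ (‖T‖ * ‖y + t • z‖) ^ 2 := by
      gcongr
      simpa [hTy, hTz] using T.le_opNorm (y + t • z)
    rw [mul_pow, norm_add_sq_real, inner_smul_right, norm_smul, mul_pow, Real.norm_eq_abs,
      sq_abs] at h
    nlinarith
  have hdisc := discrim_le_zero hquad
  rw [discrim] at hdisc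
  have hk : 1 ≤ k := one_le_pow₀ hT1
  have hsum : 0 ≤ (k - 1) * ‖y‖ ^ 2 + k * ‖z‖ ^ 2 := by
    have : 0 ≤ k - 1 := by linarith
    positivity
  -- AM-GM turns the discriminant bound into `|2 k ⟪y, z⟫| ≤ (k - 1) ‖y‖² + k ‖z‖²`.
  have hcross : (2 * k * ⟪y, z⟫) ^ 2 ≤ ((k - 1) * ‖y‖ ^ 2 + k * ‖z‖ ^ 2) ^ 2 := by
    nlinarith [sq_nonneg ((k - 1) * ‖y‖ ^ 2 - k * ‖z‖ ^ 2)]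
  have hx : ‖x‖ ^ 2 = ‖y‖ ^ 2 + 2 * ⟪y, z⟫ + ‖z‖ ^ 2 := by
    rw [← norm_add_sq_real, sub_add_cancel]
  refine (pow_le_pow_iff_left₀ (norm_nonneg y) (by positivity) two_ne_zero).mp ?_
  rw [mul_pow, hx]
  nlinarith [abs_le_of_sq_le_sq' hcross hsum]

lemma ContinuousLinearMap.norm_one_sub_le_of_isIdempotentElem {T : E →L[ℝ] E}
    (hT : IsIdempotentElem T) (hT1 : 1 ≤ ‖T‖) : ‖1 - T‖ ≤ ‖T‖ :=
  opNorm_le_bound _ (norm_nonneg T) (norm_sub_apply_le_of_isIdempotentElem hT hT1)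

end ProjectionNorm

lemma IsIdempotentElem.one_le_norm {R : Type*} [NormedRing R] {p : R} (hp : IsIdempotentElem p)
    (h0 : p ≠ 0) : 1 ≤ ‖p‖ := by
  have hpos : 0 < ‖p‖ := norm_pos_iff.mpr h0
  refine (le_mul_iff_one_le_left hpos).mp ?_
  calc ‖p‖ = ‖p * p‖ := by rw [hp.eq]
    _ ≤ ‖p‖ * ‖p‖ := norm_mul_le p p

namespace Matrix

section L2OpNorm

variable {𝕜 : Type*} [RCLike 𝕜] {m n : Type*} [Fintype m] [Fintype n] [DecidableEq n]

lemma l2_opNorm_one_le : ‖(1 : Matrix n n 𝕜)‖ ≤ 1 := by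
  rw [← l2_opNorm_toEuclideanCLM, map_one]
  exact ContinuousLinearMap.norm_id_le

lemma l2_opNorm_transpose [DecidableEq m] (A : Matrix m n ℝ) : ‖Aᵀ‖ = ‖A‖ := by
  rw [← conjTranspose_eq_transpose_of_trivial, l2_opNorm_conjTranspose]

lemma l2_opNorm_le_one_of_conjTranspose_mul_self_eq_one {A : Matrix m n 𝕜} (hA : Aᴴ * A = 1) :
    ‖A‖ ≤ 1 := by
  have h : ‖A‖ * ‖A‖ ≤ 1 := l2_opNorm_conjTranspose_mul_self A ▸ hA ▸ l2_opNorm_one_le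
  nlinarith [norm_nonneg A]

lemma l2_opNorm_one_sub_le_of_isIdempotentElem {P : Matrix n n ℝ} (hP : IsIdempotentElem P)
    (hP1 : 1 ≤ ‖P‖) : ‖1 - P‖ ≤ ‖P‖ := by
  rw [← l2_opNorm_toEuclideanCLM, map_sub, map_one]
  exact ContinuousLinearMap.norm_one_sub_le_of_isIdempotentElem (hP.map _) hP1

end L2OpNorm

end Matrix

section InterpolatoryProjection

variable {n r : ℕ} {Q : Matrix (Fin n) (Fin r) ℝ} {g : Fin r → Fin n}

lemma transpose_selId_mul {α : Type*} (g : Fin r → Fin n) (A : Matrix (Fin n) α ℝ) :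
    (selId g)ᵀ * A = A.submatrix g id := by
  ext i j
  simp [selId, Matrix.mul_apply]

lemma transpose_selId_mul_selId (hg : Function.Injective g) : (selId g)ᵀ * selId g = 1 := by
  rw [transpose_selId_mul]
  ext i j
  simp [selId, Matrix.one_apply, hg.eq_iff]

noncomputable def interpProj (Q : Matrix (Fin n) (Fin r) ℝ) (g : Fin r → Fin n) :
    Matrix (Fin n) (Fin n) ℝ :=
  Q * (Q.submatrix g id)⁻¹ * (selId g)ᵀ

lemma interpProj_mul_basis (hQg : IsUnit (Q.submatrix g id)) : interpProj Q g * Q = Q := by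
  rw [interpProj, Matrix.mul_assoc, transpose_selId_mul, Matrix.mul_assoc,
    Matrix.nonsing_inv_mul _ ((Matrix.isUnit_iff_isUnit_det _).mp hQg), Matrix.mul_one]

lemma isIdempotentElem_interpProj (hQg : IsUnit (Q.submatrix g id)) :
    IsIdempotentElem (interpProj Q g) := by
  unfold IsIdempotentElem
  nth_rw 2 [interpProj]
  rw [Matrix.mul_assoc Q, ← Matrix.mul_assoc, interpProj_mul_basis hQg, ← Matrix.mul_assoc]
  rfl

lemma interpProj_mul_selId (hg : Function.Injective g) :
    interpProj Q g * selId g = Q * (Q.submatrix g id)⁻¹ := by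
  rw [interpProj, Matrix.mul_assoc, transpose_selId_mul_selId hg, Matrix.mul_one]

lemma one_sub_interpProj_mul_one_sub_mul_transpose (hQg : IsUnit (Q.submatrix g id)) :
    (1 - interpProj Q g) * (1 - Q * Qᵀ) = 1 - interpProj Q g := by
  rw [Matrix.mul_sub, Matrix.mul_one, Matrix.sub_mul _ _ (Q * Qᵀ), Matrix.one_mul,
    ← Matrix.mul_assoc, interpProj_mul_basis hQg, sub_self, sub_zero]

lemma l2_opNorm_interpProj (hQ : Qᵀ * Q = 1) (hg : Function.Injective g) :
    ‖interpProj Q g‖ = ‖(Q.submatrix g id)⁻¹‖ := by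
  have hQn : ‖Q‖ ≤ 1 := l2_opNorm_le_one_of_conjTranspose_mul_self_eq_one <| by
    rwa [conjTranspose_eq_transpose_of_trivial]
  have hEn : ‖selId g‖ ≤ 1 := l2_opNorm_le_one_of_conjTranspose_mul_self_eq_one <| by
    rw [conjTranspose_eq_transpose_of_trivial, transpose_selId_mul_selId hg]
  apply le_antisymm
  · calc ‖interpProj Q g‖ ≤ ‖Q‖ * ‖(Q.submatrix g id)⁻¹‖ * ‖(selId g)ᵀ‖ :=
          (l2_opNorm_mul _ _).trans (by gcongr; exact l2_opNorm_mul _ _)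
      _ ≤ 1 * ‖(Q.submatrix g id)⁻¹‖ * 1 := by rw [l2_opNorm_transpose]; gcongr
      _ = ‖(Q.submatrix g id)⁻¹‖ := by ring
  · calc ‖(Q.submatrix g id)⁻¹‖ = ‖Qᵀ * (interpProj Q g * selId g)‖ := by
          rw [interpProj_mul_selId hg, ← Matrix.mul_assoc, hQ, Matrix.one_mul]
      _ ≤ ‖Qᵀ‖ * (‖interpProj Q g‖ * ‖selId g‖) :=
          (l2_opNorm_mul _ _).trans (by gcongr; exact l2_opNorm_mul _ _)
      _ ≤ 1 * (‖interpProj Q g‖ * 1) := by rw [l2_opNorm_transpose]; gcongr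
      _ = ‖interpProj Q g‖ := by ring

lemma one_le_l2_opNorm_interpProj (hr : 0 < r) (hQ : Qᵀ * Q = 1)
    (hQg : IsUnit (Q.submatrix g id)) : 1 ≤ ‖interpProj Q g‖ := by
  refine (isIdempotentElem_interpProj hQg).one_le_norm fun hP => ?_
  have : Nonempty (Fin r) := ⟨⟨0, hr⟩⟩
  have hQ0 : Q = 0 := by rw [← interpProj_mul_basis hQg, hP, Matrix.zero_mul]
  simp [hQ0] at hQ

lemma l2_opNorm_sub_interpProj_mul_le {α : Type*} [Fintype α] [DecidableEq α] (hr : 0 < r)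
    (hQ : Qᵀ * Q = 1) (hg : Function.Injective g) (hQg : IsUnit (Q.submatrix g id))
    (Z : Matrix (Fin n) α ℝ) :
    ‖Z - interpProj Q g * Z‖ ≤ ‖(Q.submatrix g id)⁻¹‖ * ‖(1 - Q * Qᵀ) * Z‖ :=
  calc ‖Z - interpProj Q g * Z‖ = ‖(1 - interpProj Q g) * ((1 - Q * Qᵀ) * Z)‖ := by
        rw [← Matrix.mul_assoc, one_sub_interpProj_mul_one_sub_mul_transpose hQg,
          Matrix.sub_mul, Matrix.one_mul]
    _ ≤ ‖1 - interpProj Q g‖ * ‖(1 - Q * Qᵀ) * Z‖ := l2_opNorm_mul _ _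
    _ ≤ ‖interpProj Q g‖ * ‖(1 - Q * Qᵀ) * Z‖ := by
        gcongr ?_ * _
        exact l2_opNorm_one_sub_le_of_isIdempotentElem (isIdempotentElem_interpProj hQg)
          (one_le_l2_opNorm_interpProj hr hQ hQg)
    _ = ‖(Q.submatrix g id)⁻¹‖ * ‖(1 - Q * Qᵀ) * Z‖ := by rw [l2_opNorm_interpProj hQ hg]

end InterpolatoryProjection

theorem interpolatory_projection_norm_and_error_general
    {n r : ℕ} (hr : 0 < r)
    (Q : Matrix (Fin n) (Fin r) ℝ) (hQ : Qᵀ * Q = 1)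
    (g : Fin r → Fin n) (hg : Function.Injective g)
    (hQg : IsUnit (Q.submatrix g id)) :
    specNorm (Q * (Q.submatrix g id)⁻¹ * (selId g)ᵀ) = specNorm (Q.submatrix g id)⁻¹ ∧
    1 ≤ specNorm (Q * (Q.submatrix g id)⁻¹ * (selId g)ᵀ) ∧
    ∀ (m : ℕ) (Z : Matrix (Fin n) (Fin m) ℝ),
      specNorm (Z - Q * (Q.submatrix g id)⁻¹ * (selId g)ᵀ * Z)
        ≤ specNorm (Q.submatrix g id)⁻¹ * specNorm ((1 - Q * Qᵀ) * Z) :=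
  -- `specNorm` is definitionally the norm of the scoped instance `Matrix.Norms.L2Operator`.
  ⟨l2_opNorm_interpProj hQ hg, one_le_l2_opNorm_interpProj hr hQ hQg,
    fun _ Z => l2_opNorm_sub_interpProj_mul_le hr hQ hg hQg Z⟩

/-- For the interpolatory projection `P = Q Q(I,:)⁻¹ E_Iᵀ` built from an
orthonormal basis `Q` and a size-`r` index set `I` with `Q(I,:)` invertible
(and `0 < r < n`), the operator norm satisfies `‖P‖₂ = ‖Q(I,:)⁻¹‖₂`, `‖P‖₂ ≥ 1`,
and the interpolation error is bounded by
`‖Z − PZ‖₂ ≤ ‖Q(I,:)⁻¹‖₂ · ‖(I − QQᵀ)Z‖₂` for every `Z`. -/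
theorem interpolatory_projection_norm_and_error
    {n r : ℕ} (hr : 0 < r) (hrn : r < n)
    (Q : Matrix (Fin n) (Fin r) ℝ) (hQ : Qᵀ * Q = 1)
    (g : Fin r → Fin n) (hg : Function.Injective g)
    (hQg : IsUnit (Q.submatrix g id)) :
    specNorm (Q * (Q.submatrix g id)⁻¹ * (selId g)ᵀ) = specNorm (Q.submatrix g id)⁻¹ ∧
    1 ≤ specNorm (Q * (Q.submatrix g id)⁻¹ * (selId g)ᵀ) ∧
    ∀ (m : ℕ) (Z : Matrix (Fin n) (Fin m) ℝ),
      specNorm (Z - Q * (Q.submatrix g id)⁻¹ * (selId g)ᵀ * Z)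
        ≤ specNorm (Q.submatrix g id)⁻¹ * specNorm ((1 - Q * Qᵀ) * Z) :=
  interpolatory_projection_norm_and_error_general hr Q hQ g hg hQg
end
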